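/- arXiv:1408.2248 — 2 statements merged into one kernel-verified Lean document; each statement's English description precedes it below -/
import Mathlib

section
/- For all x > 0, sinh²x/x² + tanh x/x > 2. -/
/-!
Put `a = sinh² x / x²` and `b = tanh x / x`. By AM-GM it suffices that `a b > 1`, i.e. the
Lazarević-type inequality `x³ cosh x < sinh³ x`. All the inequalities involved vanish at `0`,
so each follows from the positivity of a derivative on `(0, ∞)`; for `sinh³ x - x³ cosh x` the
derivative is `3 cosh x (sinh² x - x²) - x³ sinh x`, which is positive because
`sinh² x - x² > x⁴ / 3` (from `sinh x > x + x³/6`) and `x sinh x < x² cosh x`.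
-/

open Real Set

lemma pos_of_hasDerivAt_of_pos {f f' : ℝ → ℝ} (hf : ∀ y, HasDerivAt f (f' y) y)
    (h₀ : f 0 = 0) (hf' : ∀ y, 0 < y → 0 < f' y) {x : ℝ} (hx : 0 < x) : 0 < f x := by
  have hmono : StrictMonoOn f (Ici 0) := by
    refine strictMonoOn_of_hasDerivWithinAt_pos (convex_Ici 0)
      (fun y _ ↦ (hf y).continuousAt.continuousWithinAt)
      (fun y _ ↦ (hf y).hasDerivWithinAt) fun y hy ↦ hf' y ?_
    rwa [interior_Ici] at hy
  simpa [h₀] using hmono self_mem_Ici hx.le hx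

lemma one_add_sq_div_two_lt_cosh {x : ℝ} (hx : 0 < x) : 1 + x ^ 2 / 2 < cosh x := by
  have hderiv (y : ℝ) : HasDerivAt (fun y ↦ cosh y - 1 - y ^ 2 / 2) (sinh y - y) y :=
    (((hasDerivAt_cosh y).sub_const 1).sub ((hasDerivAt_pow 2 y).div_const 2)).congr_deriv
      (by push_cast; ring)
  have := pos_of_hasDerivAt_of_pos hderiv (by simp)
    (fun y hy ↦ sub_pos.2 (self_lt_sinh_iff.2 hy)) hx
  linarith

lemma add_pow_three_div_six_lt_sinh {x : ℝ} (hx : 0 < x) : x + x ^ 3 / 6 < sinh x := by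
  have hderiv (y : ℝ) :
      HasDerivAt (fun y ↦ sinh y - y - y ^ 3 / 6) (cosh y - 1 - y ^ 2 / 2) y :=
    (((hasDerivAt_sinh y).sub (hasDerivAt_id' y)).sub
      ((hasDerivAt_pow 3 y).div_const 6)).congr_deriv (by push_cast; ring)
  have := pos_of_hasDerivAt_of_pos hderiv (by simp)
    (fun y hy ↦ by linarith [one_add_sq_div_two_lt_cosh hy]) hx
  linarith

lemma sinh_lt_mul_cosh {x : ℝ} (hx : 0 < x) : sinh x < x * cosh x := by
  have hderiv (y : ℝ) : HasDerivAt (fun y ↦ y * cosh y - sinh y) (y * sinh y) y :=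
    (((hasDerivAt_id' y).mul (hasDerivAt_cosh y)).sub (hasDerivAt_sinh y)).congr_deriv
      (by ring)
  have := pos_of_hasDerivAt_of_pos hderiv (by simp)
    (fun y hy ↦ mul_pos hy (sinh_pos_iff.2 hy)) hx
  linarith

lemma pow_three_mul_cosh_lt_sinh_pow_three {x : ℝ} (hx : 0 < x) :
    x ^ 3 * cosh x < sinh x ^ 3 := by
  have hderiv (y : ℝ) : HasDerivAt (fun y ↦ sinh y ^ 3 - y ^ 3 * cosh y)
      (3 * cosh y * (sinh y ^ 2 - y ^ 2) - y ^ 3 * sinh y) y :=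
    (((hasDerivAt_sinh y).pow 3).sub ((hasDerivAt_pow 3 y).mul (hasDerivAt_cosh y))
      ).congr_deriv (by push_cast; ring)
  have hderiv_pos (y : ℝ) (hy : 0 < y) :
      0 < 3 * cosh y * (sinh y ^ 2 - y ^ 2) - y ^ 3 * sinh y := by
    have hsinh := add_pow_three_div_six_lt_sinh hy
    have hsq : y ^ 4 / 3 < sinh y ^ 2 - y ^ 2 := by
      nlinarith [mul_self_lt_mul_self (by positivity) hsinh, pow_pos hy 6]
    have hcosh : y ^ 3 * sinh y < y ^ 4 * cosh y := by
      nlinarith [mul_lt_mul_of_pos_left (sinh_lt_mul_cosh hy) (pow_pos hy 3)]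
    nlinarith [mul_lt_mul_of_pos_left hsq (cosh_pos y)]
  have := pos_of_hasDerivAt_of_pos hderiv (by simp) hderiv_pos hx
  linarith

theorem stmt_6 (x : ℝ) (hx : 0 < x) :
    Real.sinh x ^ 2 / x ^ 2 + Real.tanh x / x > 2 := by
  have hsinh := sinh_pos_iff.2 hx
  have hcosh := cosh_pos x
  have ha : 0 < sinh x ^ 2 / x ^ 2 := by positivity
  have hb : 0 < tanh x / x := by rw [tanh_eq_sinh_div_cosh]; positivity
  have hab : 1 < sinh x ^ 2 / x ^ 2 * (tanh x / x) := by
    rw [tanh_eq_sinh_div_cosh, div_div, div_mul_div_comm, one_lt_div (by positivity)]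
    linarith [pow_three_mul_cosh_lt_sinh_pow_three hx]
  nlinarith [sq_nonneg (sinh x ^ 2 / x ^ 2 - tanh x / x)]
end

section
/- For all x > 0, the chain of inequalities holds: (cosh x)^{1/3} < (1/3 + (2/3) cosh x)^{1/2} < (1/2 + (1/2) cosh x)^{2/3} < (8/15 + (7/15) cosh x)^{5/7} < (sinh x)/x < 2/3 + (1/3) cosh x. -/
/-!
With `t = cosh x - 1`, the first three inequalities say that `a ↦ (1 + a t) ^ (1 / a)` is
strictly decreasing, which is the strict concavity of `log`.

The last two reduce to inequalities `sinh y * R (cosh y) < y` for rational functions `R`: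
the difference vanishes at `0` and its derivative `1 - c R(c) - (c² - 1) R'(c)` (with
`c = cosh y`) is a positive multiple of a power of `c - 1`. For the fourth inequality this is
applied to the numerator of the derivative of `7 log (sinh y / y) - 5 log (8/15 + 7/15 cosh y)`.
-/

open Real Set

lemma one_add_mul_rpow_div_lt_of_lt {a b c t : ℝ} (hb : 0 < b) (hba : b < a) (hc : 0 < c)
    (ht : t ≠ 0) (hat : 0 < 1 + a * t) :
    (1 + a * t) ^ (c / a) < (1 + b * t) ^ (c / b) := by
  have ha : 0 < a := hb.trans hba
  have hw : 0 < b / a := div_pos hb ha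
  have hw' : 0 < 1 - b / a := by rw [sub_pos, div_lt_one ha]; exact hba
  have hmix : (1 - b / a) * 1 + b / a * (1 + a * t) = 1 + b * t := by field_simp; ring
  have hbt : 0 < 1 + b * t := hmix ▸ by positivity
  have hlog : b / a * log (1 + a * t) < log (1 + b * t) := by
    have := strictConcaveOn_log_Ioi.2 (mem_Ioi.2 one_pos) (mem_Ioi.2 hat)
      (by simpa using mul_ne_zero ha.ne' ht) hw' hw (by ring)
    simpa only [smul_eq_mul, hmix, log_one, mul_zero, zero_add] using this
  rw [rpow_def_of_pos hat, rpow_def_of_pos hbt, exp_lt_exp]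
  calc log (1 + a * t) * (c / a) = c / b * (b / a * log (1 + a * t)) := by field_simp
    _ < c / b * log (1 + b * t) := by gcongr
    _ = log (1 + b * t) * (c / b) := mul_comm _ _

lemma pos_of_hasDerivAt_pos {f f' : ℝ → ℝ} (hf : ContinuousOn f (Ici 0)) (h0 : f 0 = 0)
    (hf' : ∀ y, 0 < y → HasDerivAt f (f' y) y) (hpos : ∀ y, 0 < y → 0 < f' y) {x : ℝ}
    (hx : 0 < x) : 0 < f x := by
  have hmono : StrictMonoOn f (Ici 0) := by
    refine strictMonoOn_of_hasDerivWithinAt_pos (f' := f') (convex_Ici 0) hf (fun y hy => ?_)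
      fun y hy => ?_
    all_goals rw [interior_Ici] at hy
    exacts [(hf' y hy).hasDerivWithinAt, hpos y hy]
  simpa [h0] using hmono self_mem_Ici hx.le hx

lemma sinh_mul_comp_cosh_lt {R R' : ℝ → ℝ} (hR : ∀ c, 1 ≤ c → HasDerivAt R (R' c) c)
    (hR' : ∀ c, 1 < c → c * R c + (c ^ 2 - 1) * R' c < 1) {y : ℝ} (hy : 0 < y) :
    sinh y * R (cosh y) < y := by
  have hderiv (z : ℝ) : HasDerivAt (fun z => z - sinh z * R (cosh z))
      (1 - (cosh z * R (cosh z) + sinh z * (R' (cosh z) * sinh z))) z :=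
    (hasDerivAt_id z).sub
      ((hasDerivAt_sinh z).mul ((hR _ (one_le_cosh z)).comp z (hasDerivAt_cosh z)))
  suffices 0 < y - sinh y * R (cosh y) by linarith
  refine pos_of_hasDerivAt_pos (fun z _ => (hderiv z).continuousAt.continuousWithinAt)
    (by simp) (fun z _ => hderiv z) (fun z hz => ?_) hy
  linear_combination hR' (cosh z) (one_lt_cosh.2 hz.ne') + R' (cosh z) * sinh_sq z

lemma sinh_mul_eight_add_seven_cosh_lt {y : ℝ} (hy : 0 < y) :
    sinh y * (8 + 7 * cosh y) < y * (2 * cosh y ^ 2 + 8 * cosh y + 5) := by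
  have hA {c : ℝ} (hc : 1 ≤ c) : 0 < 2 * c ^ 2 + 8 * c + 5 := by positivity
  have hR (c : ℝ) (hc : 1 ≤ c) : HasDerivAt (fun c => (8 + 7 * c) / (2 * c ^ 2 + 8 * c + 5))
      ((7 * (2 * c ^ 2 + 8 * c + 5) - (8 + 7 * c) * (4 * c + 8)) / (2 * c ^ 2 + 8 * c + 5) ^ 2)
      c := by
    refine ((((hasDerivAt_id' c).const_mul 7).const_add 8).fun_div
      ((((hasDerivAt_pow 2 c).const_mul 2).fun_add ((hasDerivAt_id' c).const_mul 8)).add_const 5)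
      (hA hc).ne').congr_deriv ?_
    ring
  have := sinh_mul_comp_cosh_lt hR (fun c hc => ?_) hy
  · rwa [mul_div_assoc', div_lt_iff₀ (hA (one_le_cosh y))] at this
  have hA := hA hc.le
  rw [← sub_pos]
  field_simp
  nlinarith [pow_pos (sub_pos.2 hc) 3]

lemma rpow_lt_sinh_div_self {x : ℝ} (hx : 0 < x) :
    (8 / 15 + 7 / 15 * cosh x) ^ ((5 : ℝ) / 7) < sinh x / x := by
  -- `dslope sinh 0` is `sinh y / y` extended continuously by `1` at `0`
  set g : ℝ → ℝ := fun y => 7 * log (dslope sinh 0 y) - 5 * log (8 / 15 + 7 / 15 * cosh y)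
  have hD (y : ℝ) : 0 < 8 / 15 + 7 / 15 * cosh y := by positivity
  have hslope {y : ℝ} (hy : y ≠ 0) : dslope sinh 0 y = sinh y / y := by
    simp [dslope_of_ne _ hy, slope_def_field]
  have hcont : ContinuousOn g (Ici 0) := by
    have hq : Continuous (dslope sinh 0) := continuousOn_univ.1 <|
      (continuousOn_dslope Filter.univ_mem).2 ⟨continuous_sinh.continuousOn, differentiable_sinh 0⟩
    have hq0 (y : ℝ) (hy : y ∈ Ici 0) : dslope sinh 0 y ≠ 0 := by
      rcases (mem_Ici.1 hy).eq_or_lt with rfl | hy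
      · simp
      · have := sinh_pos_iff.2 hy
        rw [hslope hy.ne']
        positivity
    have := hq.continuousOn.log hq0
    fun_prop (disch := exact fun y _ => (hD y).ne')
  have hderiv (y : ℝ) (hy : 0 < y) : HasDerivAt g
      (7 * (y * (2 * cosh y ^ 2 + 8 * cosh y + 5) - sinh y * (8 + 7 * cosh y)) /
        (y * sinh y * (8 + 7 * cosh y))) y := by
    have hs := sinh_pos_iff.2 hy
    have h := ((((hasDerivAt_sinh y).log hs.ne').sub (hasDerivAt_log hy.ne')).const_mul 7).sub
      ((((hasDerivAt_cosh y).const_mul (7 / 15)).const_add (8 / 15)).log (hD y).ne' |>.const_mul 5)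
    refine (h.congr_of_eventuallyEq ?_).congr_deriv ?_
    · filter_upwards [Ioi_mem_nhds hy] with z hz
      simp only [g, hslope (ne_of_gt hz), log_div (sinh_pos_iff.2 hz).ne' (ne_of_gt hz)]
      rfl
    · field_simp
      linear_combination (-5 * y) * sinh_sq y
  have hg : 0 < g x := by
    refine pos_of_hasDerivAt_pos hcont (by norm_num [g]) hderiv (fun y hy => ?_) hx
    have hs := sinh_pos_iff.2 hy
    have := sinh_mul_eight_add_seven_cosh_lt hy
    exact div_pos (by linarith) (mul_pos (mul_pos hy hs) (by positivity))
  have hs := sinh_pos_iff.2 hx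
  simp only [g, hslope hx.ne'] at hg
  rw [rpow_def_of_pos (hD x), ← exp_log (div_pos hs hx), exp_lt_exp]
  linarith

lemma sinh_div_self_lt {x : ℝ} (hx : 0 < x) : sinh x / x < 2 / 3 + 1 / 3 * cosh x := by
  have hR (c : ℝ) (hc : 1 ≤ c) : HasDerivAt (fun c => 3 / (2 + c)) (-3 / (2 + c) ^ 2) c := by
    refine ((hasDerivAt_const c (3 : ℝ)).fun_div ((hasDerivAt_id' c).const_add 2)
      (by linarith)).congr_deriv ?_
    ring
  have hR' (c : ℝ) (hc : 1 < c) : c * (3 / (2 + c)) + (c ^ 2 - 1) * (-3 / (2 + c) ^ 2) < 1 := by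
    have h2 : 0 < 2 + c := by linarith
    rw [← sub_pos]
    field_simp
    nlinarith [sq_pos_of_pos (sub_pos.2 hc)]
  have key := sinh_mul_comp_cosh_lt hR hR' hx
  rw [mul_div_assoc', div_lt_iff₀ (by positivity)] at key
  rw [div_lt_iff₀ hx]
  linarith

theorem stmt_14 (x : ℝ) (hx : 0 < x) :
    (Real.cosh x) ^ ((1 : ℝ) / 3) < (1 / 3 + (2 / 3) * Real.cosh x) ^ ((1 : ℝ) / 2) ∧
    (1 / 3 + (2 / 3) * Real.cosh x) ^ ((1 : ℝ) / 2)
      < (1 / 2 + (1 / 2) * Real.cosh x) ^ ((2 : ℝ) / 3) ∧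
    (1 / 2 + (1 / 2) * Real.cosh x) ^ ((2 : ℝ) / 3)
      < (8 / 15 + (7 / 15) * Real.cosh x) ^ ((5 : ℝ) / 7) ∧
    (8 / 15 + (7 / 15) * Real.cosh x) ^ ((5 : ℝ) / 7) < Real.sinh x / x ∧
    Real.sinh x / x < 2 / 3 + (1 / 3) * Real.cosh x := by
  have hmean {a b : ℝ} (hb : 0 < b) (hba : b < a) :
      (1 - a + a * cosh x) ^ ((1 / 3 : ℝ) / a) < (1 - b + b * cosh x) ^ ((1 / 3 : ℝ) / b) := by
    have hcosh := one_lt_cosh.2 hx.ne'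
    have := one_add_mul_rpow_div_lt_of_lt hb hba (by norm_num : (0 : ℝ) < 1 / 3)
      (sub_pos.2 hcosh).ne' (by nlinarith)
    simpa only [show ∀ a : ℝ, 1 + a * (cosh x - 1) = 1 - a + a * cosh x from fun a => by ring]
      using this
  refine ⟨?_, ?_, ?_, rpow_lt_sinh_div_self hx, sinh_div_self_lt hx⟩
  · convert hmean (a := 1) (b := 2 / 3) (by norm_num) (by norm_num) using 2 <;> norm_num
  · convert hmean (a := 2 / 3) (b := 1 / 2) (by norm_num) (by norm_num) using 2 <;> norm_num
  · convert hmean (a := 1 / 2) (b := 7 / 15) (by norm_num) (by norm_num) using 2 <;> norm_num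
end
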